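/- arXiv:1802.01223 — 2 statements merged into one kernel-verified Lean document; each statement's English description precedes it below -/
import Mathlib

section
/- Let Z be a nonnegative random variable with E[Z²] = 1 whose tail satisfies P(Z ≥ t) ≤ 2·exp(−c·t/K) for all t ≥ 0, where K ≥ 1/2 and c > 0. Then there exists a constant c₀ > 0 (depending only on c) such that E[Z] ≥ 1/(2·c₀·K·log₂(4K)). -/
/-!
Pointwise `Z² ≤ M Z + Z² 𝟙{M ≤ Z}` for `M ≥ 0`, so `1 = E[Z²] ≤ M E[Z] + E[Z²; M ≤ Z]`. By the
layer-cake formula and the tail bound, the last term is at most `16 (K/c)² exp (-c M / (2K))`,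
which equals `1/2 · aK² / (1 + aK²) ≤ 1/2` for `M = (2K/c) log (1 + aK²)`, `a = 32/c²`. Hence
`E[Z] ≥ 1/(2M)`, and `M ≤ c₀ K log₂ (4K)` with `c₀ = (2/c)(log (1 + a) + 2)`.
-/

open MeasureTheory Real Set

lemma rpow_sub_one_smul_exp_neg_mul_sqrt_rpow_two {b x : ℝ} (hx : 0 ≤ x) :
    x ^ ((2:ℝ) - 1) • exp (-b * √(x ^ (2:ℝ))) = x ^ ((2:ℝ) - 1) * exp (-(b * x)) := by
  rw [rpow_two, sqrt_sq hx, smul_eq_mul, neg_mul]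

lemma integrableOn_exp_neg_mul_sqrt {b : ℝ} (hb : 0 < b) :
    IntegrableOn (fun t ↦ exp (-b * √t)) (Ioi 0) := by
  refine (integrableOn_Ioi_comp_rpow_iff' _ two_ne_zero).1 <|
    (integrableOn_rpow_mul_exp_neg_mul_rpow (s := 2 - 1) (by norm_num) one_pos hb).congr_fun
      (fun x hx ↦ ?_) measurableSet_Ioi
  dsimp only
  rw [rpow_sub_one_smul_exp_neg_mul_sqrt_rpow_two (le_of_lt hx), rpow_one, neg_mul]

lemma integral_exp_neg_mul_sqrt {b : ℝ} (hb : 0 < b) :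
    ∫ t in Ioi 0, exp (-b * √t) = 2 / b ^ 2 := by
  rw [← integral_comp_rpow_Ioi_of_pos two_pos]
  simp_rw [mul_smul]
  rw [integral_smul, setIntegral_congr_fun measurableSet_Ioi
      (fun x hx ↦ rpow_sub_one_smul_exp_neg_mul_sqrt_rpow_two (le_of_lt hx)),
    integral_rpow_mul_exp_neg_mul_Ioi two_pos hb, Real.Gamma_two, smul_eq_mul, rpow_two]
  ring

section Truncation

variable {Ω : Type*} [MeasurableSpace Ω] {μ : Measure Ω} {Z : Ω → ℝ}

lemma integral_sq_le_mul_integral_add_integral_indicator (hZ : Measurable Z)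
    (hZ0 : ∀ ω, 0 ≤ Z ω) (hZ1 : Integrable Z μ) (hZ2 : Integrable (fun ω ↦ Z ω ^ 2) μ)
    {M : ℝ} (hM : 0 ≤ M) :
    ∫ ω, Z ω ^ 2 ∂μ ≤ M * ∫ ω, Z ω ∂μ + ∫ ω, {ω | M ≤ Z ω}.indicator (fun ω ↦ Z ω ^ 2) ω ∂μ := by
  have hind := hZ2.indicator (measurableSet_le (measurable_const (a := M)) hZ)
  rw [← integral_const_mul, ← integral_add (hZ1.const_mul M) hind]
  refine integral_mono hZ2 ((hZ1.const_mul M).add hind) fun ω ↦ ?_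
  by_cases h : M ≤ Z ω
  · simp only [Set.indicator_of_mem (show ω ∈ {ω | M ≤ Z ω} from h)]
    nlinarith [hZ0 ω]
  · simp only [Set.indicator_of_notMem (show ω ∉ {ω | M ≤ Z ω} from h), add_zero]
    nlinarith [hZ0 ω]

variable [IsFiniteMeasure μ]

/-- On `{M ≤ Z}`, `t < Z²` forces `(M + √t) / 2 ≤ Z`: the level sets of the truncated second
moment inherit the tail bound with the extra factor `exp (-b * M / 2)`. -/
lemma integral_indicator_sq_le_of_tail (hZ : Measurable Z) (hZ0 : ∀ ω, 0 ≤ Z ω)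
    (hZ2 : Integrable (fun ω ↦ Z ω ^ 2) μ) {A b M : ℝ} (hb : 0 < b) (hM : 0 ≤ M)
    (htail : ∀ t, 0 ≤ t → μ.real {ω | t ≤ Z ω} ≤ A * exp (-b * t)) :
    ∫ ω, {ω | M ≤ Z ω}.indicator (fun ω ↦ Z ω ^ 2) ω ∂μ ≤ 8 * A * exp (-b * M / 2) / b ^ 2 := by
  set g := {ω | M ≤ Z ω}.indicator (fun ω ↦ Z ω ^ 2)
  have hg0 : ∀ ω, 0 ≤ g ω := fun ω ↦ Set.indicator_nonneg (fun ω _ ↦ sq_nonneg (Z ω)) ω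
  have hlevel : ∀ t > 0, {ω | t < g ω} ⊆ {ω | (M + √t) / 2 ≤ Z ω} := by
    intro t ht ω hω
    by_cases h : M ≤ Z ω
    · have hlt : t < Z ω ^ 2 := by simpa [g, h] using hω
      have : √t ≤ Z ω := by
        simpa [sqrt_sq (hZ0 ω)] using sqrt_le_sqrt hlt.le
      show (M + √t) / 2 ≤ Z ω
      linarith
    · have : t < 0 := by simpa [g, h] using hω
      linarith
  have hbound : ∀ t > 0, μ.real {ω | t < g ω} ≤ A * exp (-b * M / 2) * exp (-(b / 2) * √t) := by
    intro t ht
    calc μ.real {ω | t < g ω} ≤ μ.real {ω | (M + √t) / 2 ≤ Z ω} := measureReal_mono (hlevel t ht)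
      _ ≤ A * exp (-b * ((M + √t) / 2)) := htail _ (by positivity)
      _ = A * exp (-b * M / 2) * exp (-(b / 2) * √t) := by rw [mul_assoc, ← exp_add]; ring_nf
  rw [(hZ2.indicator (measurableSet_le (measurable_const (a := M)) hZ)).integral_eq_integral_meas_lt
    (.of_forall hg0)]
  calc ∫ t in Ioi 0, μ.real {ω | t < g ω}
      ≤ ∫ t in Ioi 0, A * exp (-b * M / 2) * exp (-(b / 2) * √t) := by
        refine integral_mono_of_nonneg (.of_forall fun _ ↦ measureReal_nonneg)
          ((integrableOn_exp_neg_mul_sqrt (half_pos hb)).const_mul _) ?_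
        exact (ae_restrict_iff' measurableSet_Ioi).2 (.of_forall hbound)
    _ = 8 * A * exp (-b * M / 2) / b ^ 2 := by
        rw [integral_const_mul, integral_exp_neg_mul_sqrt (half_pos hb)]
        field_simp
        ring

lemma one_div_two_mul_le_integral_of_integral_indicator_sq_le (hZ : Measurable Z)
    (hZ0 : ∀ ω, 0 ≤ Z ω) (hZ2 : ∫ ω, Z ω ^ 2 ∂μ = 1) {M : ℝ} (hM : 0 < M)
    (htrunc : ∫ ω, {ω | M ≤ Z ω}.indicator (fun ω ↦ Z ω ^ 2) ω ∂μ ≤ 1 / 2) :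
    1 / (2 * M) ≤ ∫ ω, Z ω ∂μ := by
  have hsq : Integrable (fun ω ↦ Z ω ^ 2) μ := .of_integral_ne_zero (by simp [hZ2])
  have hint : Integrable Z μ :=
    ((memLp_two_iff_integrable_sq hZ.aestronglyMeasurable).2 hsq).integrable one_le_two
  have hmoment := integral_sq_le_mul_integral_add_integral_indicator hZ hZ0 hint hsq hM.le
  rw [div_le_iff₀ (by positivity)]
  linarith

lemma integral_indicator_sq_le_half (hZ : Measurable Z) (hZ0 : ∀ ω, 0 ≤ Z ω)
    (hZ2 : Integrable (fun ω ↦ Z ω ^ 2) μ) {c K : ℝ} (hc : 0 < c) (hK : 0 < K)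
    (htail : ∀ t, 0 ≤ t → μ.real {ω | t ≤ Z ω} ≤ 2 * exp (-c * t / K)) :
    ∫ ω, {ω | 2 * K / c * log (1 + 32 / c ^ 2 * K ^ 2) ≤ Z ω}.indicator (fun ω ↦ Z ω ^ 2) ω ∂μ
      ≤ 1 / 2 := by
  set D := 1 + 32 / c ^ 2 * K ^ 2 with hD_def
  have hD : 1 < D := by linarith [show 0 < 32 / c ^ 2 * K ^ 2 by positivity]
  have hexp : exp (-(c / K) * (2 * K / c * log D) / 2) = D⁻¹ := by
    rw [show -(c / K) * (2 * K / c * log D) / 2 = -log D by field_simp, exp_neg,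
      exp_log (by linarith)]
  calc _ ≤ 8 * 2 * exp (-(c / K) * (2 * K / c * log D) / 2) / (c / K) ^ 2 := by
        refine integral_indicator_sq_le_of_tail hZ hZ0 hZ2 (by positivity)
          (by have := log_pos hD; positivity) fun t ht ↦ ?_
        rw [show -(c / K) * t = -c * t / K by ring]
        exact htail t ht
    _ = (D - 1) / 2 / D := by
        rw [hexp, hD_def]; field_simp; ring
    _ ≤ 1 / 2 := by
        rw [div_le_iff₀ (by linarith)]; linarith

end Truncation

lemma log_one_add_mul_sq_le {a K : ℝ} (ha : 0 ≤ a) (hK : 1 / 2 ≤ K) :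
    log (1 + a * K ^ 2) ≤ (log (1 + a) + 2) * logb 2 (4 * K) := by
  have hL : 1 ≤ logb 2 (4 * K) := by
    rw [le_logb_iff_rpow_le one_lt_two (by linarith), rpow_one]; linarith
  have hlog2K : log (2 * K) ≤ logb 2 (4 * K) := by
    have hlog2 : log 2 < 1 := by linarith [log_two_lt_d9]
    have h4K : 0 ≤ log (4 * K) := log_nonneg (by linarith)
    calc log (2 * K) ≤ log (4 * K) := log_le_log (by linarith) (by linarith)
      _ ≤ log (4 * K) / log 2 := le_div_self h4K (log_pos one_lt_two) hlog2.le
      _ = logb 2 (4 * K) := rfl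
  have hprod : 1 + a * K ^ 2 ≤ (1 + a) * (2 * K) ^ 2 := by nlinarith
  have hsplit : log (1 + a * K ^ 2) ≤ log (1 + a) + 2 * log (2 * K) := by
    calc log (1 + a * K ^ 2) ≤ log ((1 + a) * (2 * K) ^ 2) := log_le_log (by positivity) hprod
      _ = log (1 + a) + 2 * log (2 * K) := by
        rw [log_mul (by positivity) (by positivity), log_pow]; push_cast; ring
  nlinarith [log_nonneg (show 1 ≤ 1 + a by linarith)]

/-- Lower bounding the first moment of a nonnegative random variable with unit second
moment and subexponential tail: there is a constant `c₀ > 0` depending only on `c` such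
that `E[Z] ≥ 1 / (2 c₀ K log₂(4K))`. -/
theorem stmt4 (c : ℝ) (hc : 0 < c) :
    ∃ c₀ : ℝ, 0 < c₀ ∧
      ∀ (Ω : Type) [MeasurableSpace Ω] (μ : Measure Ω) [IsProbabilityMeasure μ]
        (Z : Ω → ℝ) (K : ℝ),
        Measurable Z → (∀ ω, 0 ≤ Z ω) →
        (∫ ω, Z ω ^ 2 ∂μ) = 1 → 1 / 2 ≤ K →
        (∀ t : ℝ, 0 ≤ t → (μ {ω | t ≤ Z ω}).toReal ≤ 2 * Real.exp (-c * t / K)) →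
        1 / (2 * c₀ * K * Real.logb 2 (4 * K)) ≤ ∫ ω, Z ω ∂μ := by
  have hloga : 0 ≤ log (1 + 32 / c ^ 2) :=
    log_nonneg (by linarith [show 0 ≤ 32 / c ^ 2 by positivity])
  refine ⟨2 / c * (log (1 + 32 / c ^ 2) + 2), by positivity, ?_⟩
  intro Ω _ μ _ Z K hZ hZ0 hZ2 hK htail
  have hK0 : 0 < K := by linarith
  set M := 2 * K / c * log (1 + 32 / c ^ 2 * K ^ 2)
  have hM : 0 < M := by
    have := log_pos (by linarith [show 0 < 32 / c ^ 2 * K ^ 2 by positivity] :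
      1 < 1 + 32 / c ^ 2 * K ^ 2)
    positivity
  have hML : M ≤ 2 / c * (log (1 + 32 / c ^ 2) + 2) * K * logb 2 (4 * K) := by
    calc M ≤ 2 * K / c * ((log (1 + 32 / c ^ 2) + 2) * logb 2 (4 * K)) :=
          mul_le_mul_of_nonneg_left (log_one_add_mul_sq_le (by positivity) hK) (by positivity)
      _ = _ := by ring
  have htrunc := integral_indicator_sq_le_half hZ hZ0 (.of_integral_ne_zero (by simp [hZ2]))
    hc hK0 htail
  calc 1 / (2 * (2 / c * (log (1 + 32 / c ^ 2) + 2)) * K * logb 2 (4 * K)) ≤ 1 / (2 * M) :=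
        one_div_le_one_div_of_le (by positivity) (by linarith)
    _ ≤ ∫ ω, Z ω ∂μ :=
        one_div_two_mul_le_integral_of_integral_indicator_sq_le hZ hZ0 hZ2 hM htrunc
end

section
/- Let H₁, H_r be symmetric matrices in ℝ^{N×N} with 0 ⪯ H₁ ⪯ α·I and ‖H_r‖ ≤ ε, let H = H₁ + H_r, and let z ∈ ℝ^N satisfy zᵀH₁z ≥ β‖z‖² for β ≥ 10ε and α ≥ β. Then with step size μ = 1/α, the vector ẑ = z − μ·H·z satisfies ‖ẑ‖² ≤ (1 − β/(2α))·‖z‖². -/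
/-!
The bounds `0 ≤ H₁ ≤ α` upgrade to the cocoercivity estimate `‖H₁z‖² ≤ α⟪z, H₁z⟫`, because
`α H₁(α - H₁) = (α - H₁)H₁(α - H₁) + H₁(α - H₁)H₁` is a sum of positive operators.
Expanding `‖αz - (H₁ + H_r)z‖²` and bounding every `H_r` term by `ε‖z‖` leaves at most
`α²‖z‖² - αβ‖z‖² + (4αε + ε²)‖z‖²`, and `10ε ≤ β ≤ α` makes the error `≤ (41/100) αβ‖z‖²`.
-/

open Matrix RealInnerProductSpace

namespace LinearMap

variable {E : Type*} [NormedAddCommGroup E] [InnerProductSpace ℝ E]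

theorem IsPositive.norm_apply_sq_le_mul_inner {T : E →ₗ[ℝ] E} (hT : T.IsPositive) {α : ℝ}
    (hα : 0 < α) (hTα : T ≤ α • 1) (x : E) : ‖T x‖ ^ 2 ≤ α * ⟪x, T x⟫ := by
  have hS : (α • 1 - T).IsPositive := hTα
  have hTT : ⟪x, T (T x)⟫ = ‖T x‖ ^ 2 := by
    rw [← hT.isSymmetric, real_inner_self_eq_norm_sq]
  have key : α * (α * ⟪x, T x⟫ - ‖T x‖ ^ 2) =
      ⟪α • x - T x, T (α • x - T x)⟫ + ⟪T x, (α • 1 - T) (T x)⟫ := by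
    simp only [map_sub, map_smul, inner_sub_left, inner_sub_right, inner_smul_left,
      inner_smul_right, sub_apply, smul_apply, Module.End.one_apply, hTT,
      real_inner_self_eq_norm_sq, real_inner_comm (T x) x, RCLike.conj_to_real]
    ring
  have hnonneg : 0 ≤ α * (α * ⟪x, T x⟫ - ‖T x‖ ^ 2) :=
    key ▸ add_nonneg (hT.inner_nonneg_right _) (hS.inner_nonneg_right _)
  linarith [(mul_nonneg_iff_of_pos_left hα).1 hnonneg]

end LinearMap

section GradientStep

variable {F : Type*} [NormedAddCommGroup F] [InnerProductSpace ℝ F]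

theorem norm_le_mul_of_norm_sq_le_mul_inner {z u : F} {α : ℝ} (hα : 0 ≤ α)
    (hu : ‖u‖ ^ 2 ≤ α * ⟪z, u⟫) : ‖u‖ ≤ α * ‖z‖ := by
  have hcs : ‖u‖ * ‖u‖ ≤ (α * ‖z‖) * ‖u‖ := by
    nlinarith [real_inner_le_norm z u]
  rcases (norm_nonneg u).eq_or_lt with hzero | hpos
  · rw [← hzero]; positivity
  · exact le_of_mul_le_mul_right hcs hpos

theorem norm_smul_sub_add_sq (α : ℝ) (z u v : F) :
    ‖α • z - (u + v)‖ ^ 2 =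
      α ^ 2 * ‖z‖ ^ 2 - 2 * α * (⟪z, u⟫ + ⟪z, v⟫) + ‖u‖ ^ 2 + 2 * ⟪u, v⟫ + ‖v‖ ^ 2 := by
  rw [norm_sub_sq_real, norm_add_sq_real, inner_add_right, real_inner_smul_left,
    real_inner_smul_left, norm_smul, Real.norm_eq_abs, mul_pow, sq_abs]
  ring

theorem norm_sub_one_div_smul_add_sq_le {z u v : F} {α β ε : ℝ} (hα : 0 < α) (hβα : β ≤ α)
    (hεβ : 10 * ε ≤ β) (hu : ‖u‖ ^ 2 ≤ α * ⟪z, u⟫) (hv : ‖v‖ ≤ ε * ‖z‖)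
    (hβ : β * ‖z‖ ^ 2 ≤ ⟪z, u⟫) :
    ‖z - (1 / α) • (u + v)‖ ^ 2 ≤ (1 - β / (2 * α)) * ‖z‖ ^ 2 := by
  set e := ε * ‖z‖
  have hm : 0 ≤ ‖z‖ := norm_nonneg z
  have he : 0 ≤ e := (norm_nonneg v).trans hv
  have hem : 10 * e ≤ β * ‖z‖ := by linarith [mul_le_mul_of_nonneg_right hεβ hm]
  clear_value e
  have hβm : β * ‖z‖ ≤ α * ‖z‖ := by gcongr
  have hzv : -(α * ‖z‖ * e) ≤ α * ⟪z, v⟫ := by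
    have := (abs_le.1 ((abs_real_inner_le_norm z v).trans (by gcongr : ‖z‖ * ‖v‖ ≤ ‖z‖ * e))).1
    linarith [mul_le_mul_of_nonneg_left this hα.le]
  have huv : ⟪u, v⟫ ≤ α * ‖z‖ * e :=
    (real_inner_le_norm u v).trans
      (mul_le_mul (norm_le_mul_of_norm_sq_le_mul_inner hα.le hu) hv (norm_nonneg v)
        (by positivity))
  have hv2 : ‖v‖ ^ 2 ≤ e ^ 2 := by gcongr
  have hαe : α * ‖z‖ * e * 10 ≤ α * β * ‖z‖ ^ 2 := by
    linarith [mul_le_mul_of_nonneg_left hem (mul_nonneg hα.le hm)]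
  have he2 : e ^ 2 * 100 ≤ α * β * ‖z‖ ^ 2 := by
    linarith [mul_le_mul hem (hem.trans hβm) (by positivity) (he.trans (by linarith))]
  have key : ‖α • z - (u + v)‖ ^ 2 ≤ α ^ 2 * ((1 - β / (2 * α)) * ‖z‖ ^ 2) := by
    have hrhs : α ^ 2 * ((1 - β / (2 * α)) * ‖z‖ ^ 2) =
        α ^ 2 * ‖z‖ ^ 2 - α * β * ‖z‖ ^ 2 / 2 := by
      field_simp
    rw [norm_smul_sub_add_sq, hrhs]
    linarith [mul_le_mul_of_nonneg_left hβ hα.le, sq_nonneg e]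
  have hscale : ‖α • z - (u + v)‖ = α * ‖z - (1 / α) • (u + v)‖ := by
    rw [← norm_smul_of_nonneg hα.le, smul_sub, smul_smul, mul_one_div_cancel hα.ne', one_smul]
  rw [hscale, mul_pow] at key
  exact le_of_mul_le_mul_left key (by positivity)

end GradientStep

theorem stmt13_general (N : ℕ) (H₁ Hr : Matrix (Fin N) (Fin N) ℝ) (α β ε : ℝ)
    (hpsd : H₁.PosSemidef)
    (hub : (α • (1 : Matrix (Fin N) (Fin N) ℝ) - H₁).PosSemidef)
    (hrnorm : ‖LinearMap.toContinuousLinearMap (Matrix.toEuclideanLin Hr)‖ ≤ ε)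
    (z : EuclideanSpace ℝ (Fin N))
    (hlow : β * ‖z‖ ^ 2 ≤ ⟪z, Matrix.toEuclideanLin H₁ z⟫)
    (hβε : 10 * ε ≤ β) (hαβ : β ≤ α) (hα : 0 < α) :
    ‖z - (1 / α) • (Matrix.toEuclideanLin (H₁ + Hr)) z‖ ^ 2 ≤
      (1 - β / (2 * α)) * ‖z‖ ^ 2 := by
  have hA : (toEuclideanLin H₁).IsPositive := isPositive_toEuclideanLin_iff.2 hpsd
  have hAα : toEuclideanLin H₁ ≤ α • 1 := by
    rw [LinearMap.le_def]
    simpa [Module.End.one_eq_id] using isPositive_toEuclideanLin_iff.2 hub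
  have hR : ‖toEuclideanLin Hr z‖ ≤ ε * ‖z‖ :=
    (LinearMap.toContinuousLinearMap _).le_of_opNorm_le hrnorm z
  rw [map_add, LinearMap.add_apply]
  exact norm_sub_one_div_smul_add_sq_le hα hαβ hβε
    (hA.norm_apply_sq_le_mul_inner hα hAα z) hR hlow

/-- One-step contraction of gradient descent: if `0 ⪯ H₁ ⪯ αI`, `‖H_r‖ ≤ ε`,
`zᵀH₁z ≥ β‖z‖²`, `β ≥ 10ε` and `α ≥ β > 0`, then with step size `μ = 1/α`,
`‖z − μ(H₁+H_r)z‖² ≤ (1 − β/(2α))‖z‖²`. -/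
theorem stmt13 (N : ℕ) (H₁ Hr : Matrix (Fin N) (Fin N) ℝ) (α β ε : ℝ)
    (hsym1 : H₁.IsSymm) (hsymr : Hr.IsSymm)
    (hpsd : H₁.PosSemidef)
    (hub : (α • (1 : Matrix (Fin N) (Fin N) ℝ) - H₁).PosSemidef)
    (hrnorm : ‖LinearMap.toContinuousLinearMap (Matrix.toEuclideanLin Hr)‖ ≤ ε)
    (z : EuclideanSpace ℝ (Fin N))
    (hlow : β * ‖z‖ ^ 2 ≤ ⟪z, Matrix.toEuclideanLin H₁ z⟫)
    (hβε : 10 * ε ≤ β) (hαβ : β ≤ α) (hα : 0 < α) :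
    ‖z - (1 / α) • (Matrix.toEuclideanLin (H₁ + Hr)) z‖ ^ 2 ≤
      (1 - β / (2 * α)) * ‖z‖ ^ 2 :=
  stmt13_general N H₁ Hr α β ε hpsd hub hrnorm z hlow hβε hαβ hα
end
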